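/- Let X be a finite T₀-space and let f, g : X → X be continuous functions with f ≤ Id_X and g ≤ Id_X in the pointwise specialization order. Then (f ∘ g)^∞(X) = f^∞(X) ∩ g^∞(X), where for a continuous h ≤ Id_X, h^∞ denotes h^N for any N with h^N = h^{N+1} (such N exists). -/

import Mathlib

/-! In the specialization order `f`, `g` and `f ∘ g` are deflationary, so their iterates form
decreasing chains in the finite poset `X → X` and stabilize; the stable image of a map is then
its set of fixed points. A fixed point of `f ∘ g` is fixed by both maps, because
`x = f (g x) ≤ g x ≤ x`. -/

open unitInterval

set_option autoImplicit false

universe u v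

/-- The specialization preorder: `x ≤ y` iff every open set containing `y` contains `x`. -/
def specLE {X : Type*} [TopologicalSpace X] (x y : X) : Prop :=
  ∀ U : Set X, IsOpen U → y ∈ U → x ∈ U

/-- A continuous map `i : A → X` is a (Hurewicz) cofibration iff it has the homotopy
extension property with respect to all topological spaces. -/
def IsCofibration {A : Type*} {X : Type*} [TopologicalSpace A] [TopologicalSpace X]
    (i : C(A, X)) : Prop :=
  ∀ (Z : Type v) [TopologicalSpace Z] (f : C(X, Z)) (H : C(A × I, Z)),
    (∀ a, H (a, 0) = f (i a)) →
    ∃ G : C(X × I, Z),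
      (∀ x, G (x, 0) = f x) ∧ ∀ a t, G (i a, t) = H (a, t)

/-- `x` is a down beat point of the subspace `S`:
the set of points of `S` strictly below `x` has a maximum. -/
def IsDownBeatPoint {X : Type*} [TopologicalSpace X] (S : Set X) (x : X) : Prop :=
  x ∈ S ∧ ∃ m ∈ S, m ≠ x ∧ specLE m x ∧
    ∀ z ∈ S, z ≠ x → specLE z x → specLE z m

/-- `T` is a dbp–retract of `S`: `T` is obtained from `S` by successively
removing down beat points. -/
inductive IsDbpRetract {X : Type*} [TopologicalSpace X] : Set X → Set X → Prop
  | refl (S : Set X) : IsDbpRetract S S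
  | step {S T : Set X} (x : X) (hx : IsDownBeatPoint S x)
      (h : IsDbpRetract (S \ {x}) T) : IsDbpRetract S T

/-- The minimal open set containing `x` (in a finite space): the intersection of all
open sets containing `x`. -/
def minOpen {X : Type*} [TopologicalSpace X] (x : X) : Set X :=
  ⋂₀ {U : Set X | IsOpen U ∧ x ∈ U}

theorem specLE_iff_specializes {X : Type*} [TopologicalSpace X] {x y : X} :
    specLE x y ↔ x ⤳ y :=
  specializes_iff_forall_open.symm

/-- The order of `specLE`; Mathlib's `specializationOrder` is its dual. -/
abbrev specLEOrder (X : Type*) [TopologicalSpace X] [T0Space X] : PartialOrder X where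
  le := specLE
  le_refl _ := specLE_iff_specializes.2 specializes_rfl
  le_trans _ _ _ hxy hyz :=
    specLE_iff_specializes.2 ((specLE_iff_specializes.1 hxy).trans (specLE_iff_specializes.1 hyz))
  le_antisymm _ _ hxy hyx :=
    ((specLE_iff_specializes.1 hxy).antisymm (specLE_iff_specializes.1 hyx)).eq

namespace Function

theorem range_iterate_eq_fixedPoints {α : Type*} {h : α → α} {N : ℕ}
    (hN : h^[N + 1] = h^[N]) : Set.range h^[N] = fixedPoints h := by
  ext y
  constructor
  · rintro ⟨x, rfl⟩
    exact (iterate_succ_apply' h N x).symm.trans (congrFun hN x)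
  · exact fun hy => ⟨y, hy.iterate N⟩

variable {α : Type*} [PartialOrder α]

theorem exists_iterate_succ_eq_of_le_self [Finite α] {h : α → α} (hh : ∀ x, h x ≤ x) :
    ∃ N, h^[N + 1] = h^[N] := by
  have hanti : Antitone fun n => h^[n] := antitone_nat_of_succ_le fun n x => by
    rw [iterate_succ_apply']
    exact hh _
  obtain ⟨N, hN⟩ := WellFoundedLT.antitone_chain_condition hanti
  exact ⟨N, (hN (N + 1) N.le_succ).symm⟩

theorem fixedPoints_comp_of_le_self {f g : α → α} (hf : ∀ x, f x ≤ x) (hg : ∀ x, g x ≤ x) :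
    fixedPoints (f ∘ g) = fixedPoints f ∩ fixedPoints g := by
  ext x
  refine ⟨fun hfg => ?_, fun ⟨hfx, hgx⟩ => hfx.comp hgx⟩
  have hfgx : f (g x) = x := hfg
  have hgx : IsFixedPt g x := le_antisymm (hg x) (hfgx.ge.trans (hf (g x)))
  exact ⟨by rwa [hgx.eq] at hfgx, hgx⟩

end Function

open Function in
/-- Let `X` be a finite T₀-space and `f, g : X → X` continuous with
`f ≤ Id_X` and `g ≤ Id_X`. The stabilized iterates exist, and
`(f ∘ g)^∞(X) = f^∞(X) ∩ g^∞(X)`. -/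
theorem range_comp_infty_eq_inter
    {X : Type u} [TopologicalSpace X] [Finite X] [T0Space X]
    (f g : C(X, X)) (hf : ∀ x, specLE (f x) x) (hg : ∀ x, specLE (g x) x) :
    (∃ N : ℕ, (⇑f)^[N + 1] = (⇑f)^[N]) ∧
    (∃ M : ℕ, (⇑g)^[M + 1] = (⇑g)^[M]) ∧
    (∃ K : ℕ, (⇑f ∘ ⇑g)^[K + 1] = (⇑f ∘ ⇑g)^[K]) ∧
    ∀ N M K : ℕ, (⇑f)^[N + 1] = (⇑f)^[N] → (⇑g)^[M + 1] = (⇑g)^[M] →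
      (⇑f ∘ ⇑g)^[K + 1] = (⇑f ∘ ⇑g)^[K] →
      Set.range ((⇑f ∘ ⇑g)^[K]) = Set.range ((⇑f)^[N]) ∩ Set.range ((⇑g)^[M]) := by
  let := specLEOrder X
  have hfg : ∀ x, (f ∘ g) x ≤ x := fun x => le_trans (hf (g x)) (hg x)
  refine ⟨exists_iterate_succ_eq_of_le_self hf, exists_iterate_succ_eq_of_le_self hg,
    exists_iterate_succ_eq_of_le_self hfg, fun N M K hN hM hK => ?_⟩
  rw [range_iterate_eq_fixedPoints hN, range_iterate_eq_fixedPoints hM,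
    range_iterate_eq_fixedPoints hK]
  exact fixedPoints_comp_of_le_self hf hg
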